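/- arXiv:2509.13120 — 3 statements merged into one kernel-verified Lean document; each statement's English description precedes it below -/
import Mathlib

section
/- The braid word w_A = w_1 w_2 ⋯ w_{n−1} constructed from an n×n adjacency matrix A is a pure braid, i.e. it induces the identity permutation of the n strands; consequently its trace closure has exactly n components. -/
/-- A braid letter `σ_i^ε` on `n+1` strands. -/
abbrev BraidLetter (n : ℕ) := Fin n × Bool

/-- The adjacent transposition corresponding to a braid letter. -/
def braidLetterPerm {n : ℕ} (l : BraidLetter n) : Equiv.Perm (Fin (n + 1)) :=
  Equiv.swap l.1.castSucc l.1.succ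

/-- The permutation induced by a braid word. -/
def inducedPerm {n : ℕ} : List (BraidLetter n) → Equiv.Perm (Fin (n + 1))
  | [] => 1
  | l :: w => braidLetterPerm l * inducedPerm w

/-- The word `w_i = σ_i ⋯ σ_{n-1} σ_{n-1}^{ε_{i,n}} ⋯ σ_i^{ε_{i,i+1}}` built from the
adjacency matrix `A`, where `ε_{i,j} = +1` iff `A i j = 1`. -/
def wordW {n : ℕ} (A : Matrix (Fin (n + 1)) (Fin (n + 1)) ℤ) (i : Fin n) :
    List (BraidLetter n) :=
  (((List.finRange n).drop i.val).map fun g => (g, true)) ++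
    ((((List.finRange n).drop i.val).reverse).map fun g =>
      (g, decide (A i.castSucc g.succ = 1)))

/-- The braid word `w_A = w_1 w_2 ⋯ w_{n-1}` built from the adjacency matrix `A`. -/
def wordA {n : ℕ} (A : Matrix (Fin (n + 1)) (Fin (n + 1)) ℤ) : List (BraidLetter n) :=
  ((List.finRange n).map (wordW A)).flatten

lemma inducedPerm_eq_prod {n : ℕ} (w : List (BraidLetter n)) :
    inducedPerm w = (w.map braidLetterPerm).prod := by
  induction w with
  | nil => rfl
  | cons l w ih => simp [inducedPerm, ih]

lemma inducedPerm_append {n : ℕ} (a b : List (BraidLetter n)) :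
    inducedPerm (a ++ b) = inducedPerm a * inducedPerm b := by
  simp [inducedPerm_eq_prod]

lemma inducedPerm_wordW {n : ℕ} (A : Matrix (Fin (n + 1)) (Fin (n + 1)) ℤ) (i : Fin n) :
    inducedPerm (wordW A i) = 1 := by
  rw [inducedPerm_eq_prod, wordW]
  set L := (List.finRange n).drop i.val with hL
  rw [List.map_append, List.prod_append, List.map_map, List.map_map, List.map_reverse,
    List.prod_reverse_noncomm, List.map_map]
  have h1 : (braidLetterPerm ∘ fun g : Fin n => (g, true)) =
      fun g : Fin n => Equiv.swap g.castSucc g.succ := rfl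
  have h2 : ((fun x : Equiv.Perm (Fin (n+1)) => x⁻¹) ∘ braidLetterPerm ∘
      fun g : Fin n => (g, decide (A i.castSucc g.succ = 1))) =
      fun g : Fin n => Equiv.swap g.castSucc g.succ := by
    funext g
    simp [braidLetterPerm, Equiv.swap_inv, Function.comp]
  rw [h1, h2, mul_inv_cancel]

lemma inducedPerm_wordA {n : ℕ} (A : Matrix (Fin (n + 1)) (Fin (n + 1)) ℤ) :
    inducedPerm (wordA A) = 1 := by
  rw [wordA]
  generalize (List.finRange n) = l
  induction l with
  | nil => rfl
  | cons a l ih => simp [inducedPerm_append, inducedPerm_wordW, ih]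

/-- `w_A` is a pure braid (it induces the identity permutation of the strands);
consequently its trace closure has exactly as many components as strands, the number of
components being the number of orbits of the induced permutation. -/
theorem wordA_pure_and_components {n : ℕ} (A : Matrix (Fin (n + 1)) (Fin (n + 1)) ℤ)
    (hsymm : A.IsSymm) (hdiag : ∀ i, A i i = 0) (h01 : ∀ i j, A i j = 0 ∨ A i j = 1) :
    inducedPerm (wordA A) = 1 ∧
      Nat.card (MulAction.orbitRel.Quotient
        (Subgroup.zpowers (inducedPerm (wordA A))) (Fin (n + 1))) = n + 1 := by
  have hp := inducedPerm_wordA A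
  refine ⟨hp, ?_⟩
  rw [hp]
  have e : MulAction.orbitRel.Quotient
      (Subgroup.zpowers (1 : Equiv.Perm (Fin (n + 1)))) (Fin (n + 1)) ≃ Fin (n + 1) := by
    refine (Equiv.ofBijective (Quotient.mk'' :
      Fin (n+1) → MulAction.orbitRel.Quotient
        (Subgroup.zpowers (1 : Equiv.Perm (Fin (n + 1)))) (Fin (n + 1))) ⟨?_, ?_⟩).symm
    · intro x y h
      rw [Quotient.eq''] at h
      obtain ⟨g, hg⟩ := h
      have hg1 : (g : Equiv.Perm (Fin (n+1))) = 1 := by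
        obtain ⟨k, hk⟩ := Subgroup.mem_zpowers_iff.mp g.2
        simpa using hk.symm
      have : (g : Equiv.Perm (Fin (n+1))) • y = x := hg
      rw [hg1] at this
      simpa using this.symm
    · exact Quotient.mk''_surjective
  rw [Nat.card_congr e, Nat.card_eq_fintype_card, Fintype.card_fin]
end

section
/- In the braid word w_A constructed from adjacency matrix A, for each pair i < j the crossings between strand i and strand j consist of exactly one positive crossing σ and one crossing with sign ε_{i,j}; hence the linking number of components i and j of the trace closure equals (1 + ε_{i,j})/2, which equals A_{i,j}. Therefore lk(L_A) = A. -/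
open Finset

/-- The permutation induced by the first `t` letters of a braid word, mapping the
starting position of a strand to its position after `t` letters. -/
def prefixPerm {n : ℕ} (w : List (BraidLetter n)) (t : ℕ) : Equiv.Perm (Fin (n + 1)) :=
  (((w.take t).map braidLetterPerm).reverse).prod

/-- The `t`-th letter `σ_k^ε` of a braid word is a crossing between the two components
occupying strand positions `k` and `k+1` at that point, the components being tracked via
the permutation induced by the prefix of the word. -/
def crossingLabel {n : ℕ} (w : List (BraidLetter n)) (t : Fin w.length) :
    Sym2 (Fin (n + 1)) :=
  s((prefixPerm w t)⁻¹ (w.get t).1.castSucc, (prefixPerm w t)⁻¹ (w.get t).1.succ)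

/-- The sign of the `t`-th crossing of a braid word. -/
def crossingSign {n : ℕ} (w : List (BraidLetter n)) (t : Fin w.length) : ℤ :=
  if (w.get t).2 then 1 else -1

/-- `ε_{i,j} = +1` if `A i j = 1` and `-1` otherwise. -/
def eps {n : ℕ} (A : Matrix (Fin (n + 1)) (Fin (n + 1)) ℤ) (i j : Fin (n + 1)) : ℤ :=
  if A i j = 1 then 1 else -1

/-! Each block `w_i` induces the trivial permutation, so the crossings of `w_A` are those of
its blocks, with no relabelling. In `w_i` the strand at position `i` travels to the last
position, crossing each strand `b > i` positively, and comes back crossing it again with sign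
`ε_{i,b}`. Hence components `i < j` cross exactly twice, both times in `w_i`, with signs `1`
and `ε_{i,j}`. -/

def boolSign (b : Bool) : ℤ := if b then 1 else -1

section Crossings

variable {n : ℕ}

def braidPerm (w : List (BraidLetter n)) : Equiv.Perm (Fin (n + 1)) :=
  ((w.map braidLetterPerm).reverse).prod

@[simp]
lemma braidPerm_nil : braidPerm ([] : List (BraidLetter n)) = 1 := rfl

@[simp]
lemma braidPerm_cons (l : BraidLetter n) (w : List (BraidLetter n)) :
    braidPerm (l :: w) = braidPerm w * braidLetterPerm l := by
  simp [braidPerm]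

@[simp]
lemma braidPerm_append (u v : List (BraidLetter n)) :
    braidPerm (u ++ v) = braidPerm v * braidPerm u := by
  simp [braidPerm]

@[simp]
lemma braidLetterPerm_inv (l : BraidLetter n) : (braidLetterPerm l)⁻¹ = braidLetterPerm l :=
  Equiv.swap_inv _ _

/-- Each crossing is recorded with the pair of components involved and its sign; after the first
letter `l`, the components of the remaining word are relabelled by the transposition of `l`. -/
def crossings : List (BraidLetter n) → List (Sym2 (Fin (n + 1)) × ℤ)
  | [] => []
  | l :: w => (s(l.1.castSucc, l.1.succ), boolSign l.2) ::
      (crossings w).map (Prod.map (Sym2.map (braidLetterPerm l)) id)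

lemma crossingLabel_cons_succ (l : BraidLetter n) (w : List (BraidLetter n)) (t : Fin w.length) :
    crossingLabel (l :: w) t.succ = Sym2.map (braidLetterPerm l) (crossingLabel w t) := by
  simp [crossingLabel, prefixPerm, mul_inv_rev]

lemma crossings_eq_ofFn (w : List (BraidLetter n)) :
    crossings w = List.ofFn fun t => (crossingLabel w t, crossingSign w t) := by
  induction w with
  | nil => rfl
  | cons l w ih =>
    rw [List.ofFn_succ, crossings, ih, List.map_ofFn]
    congr 2
    funext t
    simp [crossingLabel_cons_succ, crossingSign]

lemma crossings_append (u v : List (BraidLetter n)) :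
    crossings (u ++ v) =
      crossings u ++ (crossings v).map (Prod.map (Sym2.map ⇑(braidPerm u)⁻¹) id) := by
  induction u with
  | nil => simp [crossings]
  | cons l u ih => simp [crossings, ih, mul_inv_rev, Function.comp_def, Sym2.map_map]

lemma crossings_append_of_braidPerm_eq_one {u : List (BraidLetter n)} (hu : braidPerm u = 1)
    (v : List (BraidLetter n)) : crossings (u ++ v) = crossings u ++ crossings v := by
  simp [crossings_append, hu]

lemma crossings_flatten {L : List (List (BraidLetter n))} (hL : ∀ u ∈ L, braidPerm u = 1) :
    crossings L.flatten = (L.map crossings).flatten := by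
  induction L with
  | nil => rfl
  | cons u L ih =>
    simp only [List.flatten_cons, List.map_cons]
    rw [crossings_append_of_braidPerm_eq_one (hL u (by simp)),
      ih fun v hv => hL v (by simp [hv])]

end Crossings

section LoopWord

variable {n : ℕ}

/-- `σ_k ⋯ σ_{n-1} σ_{n-1}^{ε_n} ⋯ σ_k^{ε_{k+1}}`, where `ε_b` is the sign of `s b`: the strand
at position `k` runs over to the last position and back. -/
def loopWord (s : Fin (n + 1) → Bool) (k : Fin (n + 1)) : List (BraidLetter n) :=
  (((List.finRange n).drop k).map fun g => (g, true)) ++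
    ((((List.finRange n).drop k).reverse).map fun g => (g, s g.succ))

lemma loopWord_last (s : Fin (n + 1) → Bool) : loopWord s (Fin.last n) = [] := by
  simp [loopWord]

lemma loopWord_castSucc (s : Fin (n + 1) → Bool) (j : Fin n) :
    loopWord s j.castSucc = (j, true) :: (loopWord s j.succ ++ [(j, s j.succ)]) := by
  have hdrop : (List.finRange n).drop j = j :: (List.finRange n).drop (j + 1) := by
    rw [List.drop_eq_getElem_cons (by simp)]
    simp
  simp [loopWord, hdrop]

lemma braidPerm_loopWord (s : Fin (n + 1) → Bool) (k : Fin (n + 1)) :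
    braidPerm (loopWord s k) = 1 := by
  induction k using Fin.reverseInduction with
  | last => simp [loopWord_last]
  | cast j ih => simp [loopWord_castSucc, ih, braidLetterPerm]

lemma Fin.Ioi_castSucc_eq_cons (j : Fin n) :
    Ioi j.castSucc = (Ioi j.succ).cons j.succ notMem_Ioi_self := by
  rw [← Ici_eq_cons_Ioi]
  ext b
  simp [Fin.castSucc_lt_iff_succ_le]

lemma crossings_loopWord (s : Fin (n + 1) → Bool) (k : Fin (n + 1)) :
    (crossings (loopWord s k) : Multiset _) =
      ∑ b ∈ Ioi k, ({1, boolSign (s b)} : Multiset ℤ).map (Prod.mk s(k, b)) := by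
  induction k using Fin.reverseInduction with
  | last =>
    rw [loopWord_last, ← Fin.top_eq_last, Ioi_top]
    rfl
  | cast j ih =>
    rw [loopWord_castSucc, crossings, crossings_append_of_braidPerm_eq_one (braidPerm_loopWord s _),
      Fin.Ioi_castSucc_eq_cons, sum_cons]
    have hσ : ∀ b ∈ Ioi j.succ,
        Sym2.map (braidLetterPerm (j, true)) s(j.succ, b) = s(j.castSucc, b) := by
      intro b hb
      have hb' : j.castSucc < b := Fin.castSucc_lt_succ.trans (mem_Ioi.mp hb)
      simp [braidLetterPerm, Equiv.swap_apply_of_ne_of_ne hb'.ne' (mem_Ioi.mp hb).ne']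
    simp only [← Multiset.cons_coe, ← Multiset.map_coe, ← Multiset.coe_add, ih, Multiset.map_add,
      ← Multiset.coe_mapAddMonoidHom, map_sum]
    simp only [Multiset.coe_mapAddMonoidHom, Multiset.map_map, Function.comp_def, Prod.map_apply,
      id]
    rw [sum_congr rfl fun b hb => by rw [hσ b hb]]
    simp [crossings, braidLetterPerm, Sym2.eq_swap, boolSign]
    exact (add_comm _ _).trans (Multiset.singleton_add _ _)

end LoopWord

def taggedValues {α β : Type*} [DecidableEq α] (p : α) : Multiset (α × β) →+ Multiset β where
  toFun m := (m.filter (·.1 = p)).map Prod.snd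
  map_zero' := rfl
  map_add' _ _ := by simp [Multiset.filter_add]

lemma taggedValues_apply {α β : Type*} [DecidableEq α] (p : α) (m : Multiset (α × β)) :
    taggedValues p m = (m.filter (·.1 = p)).map Prod.snd :=
  rfl

lemma taggedValues_map_mk {α β : Type*} [DecidableEq α] (p q : α) (m : Multiset β) :
    taggedValues p (m.map (Prod.mk q)) = if q = p then m else 0 := by
  by_cases h : q = p <;> simp [taggedValues_apply, Multiset.filter_map, h]

lemma Sym2.mk_eq_mk_iff_of_lt {α : Type*} [LinearOrder α] {a b c d : α} (hab : a < b)
    (hcd : c < d) : s(a, b) = s(c, d) ↔ a = c ∧ b = d := by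
  refine ⟨fun h => ?_, fun h => by rw [h.1, h.2]⟩
  rcases Sym2.eq_iff.mp h with h | ⟨rfl, rfl⟩
  · exact h
  · exact (lt_asymm hab hcd).elim

section Signs

variable {n : ℕ}

def crossingSigns (w : List (BraidLetter n)) (p : Sym2 (Fin (n + 1))) : Multiset ℤ :=
  (univ.filter fun t => crossingLabel w t = p).val.map (crossingSign w)

lemma card_filter_crossingLabel_eq (w : List (BraidLetter n)) (p : Sym2 (Fin (n + 1))) :
    (univ.filter fun t => crossingLabel w t = p).card = Multiset.card (crossingSigns w p) :=
  (Multiset.card_map _ _).symm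

lemma sum_filter_crossingLabel_eq (w : List (BraidLetter n)) (p : Sym2 (Fin (n + 1))) :
    ∑ t ∈ univ.filter (fun t => crossingLabel w t = p), crossingSign w t =
      (crossingSigns w p).sum :=
  rfl

lemma crossingSigns_eq_taggedValues (w : List (BraidLetter n)) (p : Sym2 (Fin (n + 1))) :
    crossingSigns w p = taggedValues p (crossings w : Multiset _) := by
  rw [crossingSigns, taggedValues_apply, crossings_eq_ofFn, ← Fin.univ_val_map,
    Multiset.filter_map, Multiset.map_map]
  rfl

end Signs

section WordA

variable {n : ℕ} (A : Matrix (Fin (n + 1)) (Fin (n + 1)) ℤ)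

lemma eps_eq_boolSign (i j : Fin (n + 1)) : eps A i j = boolSign (decide (A i j = 1)) := by
  simp [eps, boolSign]

lemma one_add_eps_eq {i j : Fin (n + 1)} (h : A i j = 0 ∨ A i j = 1) :
    1 + eps A i j = 2 * A i j := by
  rcases h with h | h <;> simp [eps, h]

lemma wordW_eq_loopWord (i : Fin n) :
    wordW A i = loopWord (fun b => decide (A i.castSucc b = 1)) i.castSucc :=
  rfl

lemma crossings_wordA :
    (crossings (wordA A) : Multiset _) =
      ∑ a, ∑ b ∈ Ioi a, ({1, eps A a b} : Multiset ℤ).map (Prod.mk s(a, b)) := by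
  have hperm : ∀ u ∈ (List.finRange n).map (wordW A), braidPerm u = 1 := by
    simp [wordW_eq_loopWord, braidPerm_loopWord]
  rw [wordA, crossings_flatten hperm, ← Multiset.coe_join, Multiset.join, Multiset.sum_coe,
    List.map_map, List.map_map, ← Fin.sum_univ_def, Fin.sum_univ_castSucc, ← Fin.top_eq_last,
    Ioi_top, sum_empty, add_zero]
  refine sum_congr rfl fun i _ => ?_
  simp [wordW_eq_loopWord, crossings_loopWord, eps_eq_boolSign]

lemma crossingSigns_wordA {i j : Fin (n + 1)} (hij : i < j) :
    crossingSigns (wordA A) s(i, j) = {1, eps A i j} := by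
  rw [crossingSigns_eq_taggedValues, crossings_wordA]
  simp only [map_sum, taggedValues_map_mk]
  calc ∑ a, ∑ b ∈ Ioi a, (if s(a, b) = s(i, j) then ({1, eps A a b} : Multiset ℤ) else 0)
      = ∑ a, ∑ b ∈ Ioi a, if a = i ∧ b = j then ({1, eps A a b} : Multiset ℤ) else 0 :=
        sum_congr rfl fun a _ => sum_congr rfl fun b hb =>
          if_congr (Sym2.mk_eq_mk_iff_of_lt (mem_Ioi.mp hb) hij) rfl rfl
    _ = {1, eps A i j} := by simp [ite_and, hij]

end WordA

theorem linkingMatrix_of_wordA_general {n : ℕ} (A : Matrix (Fin (n + 1)) (Fin (n + 1)) ℤ)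
    (hsymm : A.IsSymm) (h01 : ∀ i j, A i j = 0 ∨ A i j = 1) :
    (∀ i j : Fin (n + 1), i < j →
      (univ.filter fun t : Fin (wordA A).length =>
        crossingLabel (wordA A) t = s(i, j)).card = 2 ∧
      (∑ t ∈ univ.filter (fun t : Fin (wordA A).length =>
        crossingLabel (wordA A) t = s(i, j)), crossingSign (wordA A) t) = 1 + eps A i j) ∧
    (∀ i j : Fin (n + 1), i ≠ j →
      ((∑ t ∈ univ.filter (fun t : Fin (wordA A).length =>
        crossingLabel (wordA A) t = s(i, j)), crossingSign (wordA A) t : ℤ) : ℚ) / 2 =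
        ((1 + eps A i j : ℤ) : ℚ) / 2 ∧ ((1 + eps A i j : ℤ) : ℚ) / 2 = (A i j : ℚ)) := by
  have hsum : ∀ i j : Fin (n + 1), i < j →
      ∑ t ∈ univ.filter (fun t => crossingLabel (wordA A) t = s(i, j)), crossingSign (wordA A) t =
        1 + eps A i j := fun i j hij => by
    simp [sum_filter_crossingLabel_eq, crossingSigns_wordA A hij]
  refine ⟨fun i j hij => ⟨?_, hsum i j hij⟩, fun i j hne => ⟨?_, ?_⟩⟩
  · simp [card_filter_crossingLabel_eq, crossingSigns_wordA A hij]
  · rcases hne.lt_or_gt with hij | hji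
    · rw [hsum i j hij]
    · rw [Sym2.eq_swap, hsum j i hji, eps, eps, hsymm.apply i j]
  · rw [one_add_eps_eq A (h01 i j)]
    push_cast
    ring

/-- In `w_A`, for each pair `i < j` the crossings between components `i` and `j` consist
of exactly two crossings, of total sign `1 + ε_{i,j}`; hence the linking number of
components `i` and `j` of the trace closure is `(1 + ε_{i,j})/2 = A i j`, i.e.
`lk(L_A) = A`. -/
theorem linkingMatrix_of_wordA {n : ℕ} (A : Matrix (Fin (n + 1)) (Fin (n + 1)) ℤ)
    (hsymm : A.IsSymm) (hdiag : ∀ i, A i i = 0) (h01 : ∀ i j, A i j = 0 ∨ A i j = 1) :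
    (∀ i j : Fin (n + 1), i < j →
      (univ.filter fun t : Fin (wordA A).length =>
        crossingLabel (wordA A) t = s(i, j)).card = 2 ∧
      (∑ t ∈ univ.filter (fun t : Fin (wordA A).length =>
        crossingLabel (wordA A) t = s(i, j)), crossingSign (wordA A) t) = 1 + eps A i j) ∧
    (∀ i j : Fin (n + 1), i ≠ j →
      ((∑ t ∈ univ.filter (fun t : Fin (wordA A).length =>
        crossingLabel (wordA A) t = s(i, j)), crossingSign (wordA A) t : ℤ) : ℚ) / 2 =
        ((1 + eps A i j : ℤ) : ℚ) / 2 ∧ ((1 + eps A i j : ℤ) : ℚ) / 2 = (A i j : ℚ)) :=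
  linkingMatrix_of_wordA_general A hsymm h01
end

section
/- If the values (1 + ε_{i,j})/2 with ε_{i,j} ∈ {+1, −1} satisfy (1+ε_{i,j})/2 = A_{i,j} for a {0,1}-matrix A, then the pairwise linking numbers of the constructed link vanish on a set S of component indices if and only if S is an independent set of the graph with adjacency matrix A. In particular, every k-component sublink of L_A with pairwise linking number zero corresponds to a k-independent set of A (soundness of the reduction). -/
/-- A set of vertices is independent if no two of its elements are adjacent. -/
def SimpleGraph.IsIndepSet' {V : Type*} (G : SimpleGraph V) (C : Set V) : Prop :=
  C.Pairwise fun v w => ¬ G.Adj v w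

/-- Soundness of the reduction: if the link `L_A` has pairwise linking numbers
`lk i j = A i j` (where `A` is the symmetric `{0,1}` zero-diagonal adjacency matrix of
the simple graph `G`), then the pairwise linking numbers vanish on a set `S` of
component indices iff `S` is an independent set of `G`.  In particular every
`k`-component sublink with vanishing pairwise linking numbers corresponds to a
`k`-independent set. -/
theorem sublink_soundness {n : ℕ} (A : Matrix (Fin n) (Fin n) ℤ)
    (hsymm : A.IsSymm) (hdiag : ∀ i, A i i = 0) (h01 : ∀ i j, A i j = 0 ∨ A i j = 1)
    (G : SimpleGraph (Fin n)) (hadj : ∀ i j, G.Adj i j ↔ A i j = 1)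
    (lk : Fin n → Fin n → ℤ) (hlk : ∀ i j, i ≠ j → lk i j = A i j) :
    (∀ S : Finset (Fin n),
      ((∀ i ∈ S, ∀ j ∈ S, i ≠ j → lk i j = 0) ↔ G.IsIndepSet' ↑S)) ∧
    (∀ k : ℕ, ∀ S : Finset (Fin n), S.card = k →
      (∀ i ∈ S, ∀ j ∈ S, i ≠ j → lk i j = 0) →
      G.IsIndepSet' ↑S ∧ S.card = k) := by
  have main : ∀ S : Finset (Fin n),
      ((∀ i ∈ S, ∀ j ∈ S, i ≠ j → lk i j = 0) ↔ G.IsIndepSet' ↑S) := by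
    intro S
    constructor
    · intro h i hi j hj hij hadj'
      have h1 : A i j = 1 := (hadj i j).mp hadj'
      have := h i hi j hj hij
      rw [hlk i j hij, h1] at this
      exact one_ne_zero this
    · intro h i hi j hj hij
      rw [hlk i j hij]
      rcases h01 i j with h0 | h1
      · exact h0
      · exact absurd ((hadj i j).mpr h1) (h hi hj hij)
  exact ⟨main, fun k S hk h => ⟨(main S).mp h, hk⟩⟩
end
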